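/- If A ⊆ {1, 2, ..., n} is a Sidon set, then |A| < n^{1/2} + n^{1/4} + 1/2. -/
import Mathlib

/-- A finite set of integers is Sidon if `a + b = c + d` implies `{a,b} = {c,d}`. -/
def IsSidon (A : Finset ℤ) : Prop :=
  ∀ a ∈ A, ∀ b ∈ A, ∀ c ∈ A, ∀ d ∈ A,
    a + b = c + d → (a = c ∧ b = d) ∨ (a = d ∧ b = c)

/-- The set of positive differences of elements of `X`. -/
def posDiffs (X : Finset ℤ) : Finset ℤ :=
  ((X ×ˢ X).filter (fun p => p.2 < p.1)).image (fun p => p.1 - p.2)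


/-- Sum of a finset of distinct integers, each ≥ 1, is at least triangular. -/
lemma sum_distinct_pos (S : Finset ℤ) (h : ∀ s ∈ S, 1 ≤ s) :
    (S.card : ℤ) * (S.card + 1) ≤ 2 * ∑ s ∈ S, s := by
  induction S using Finset.strongInduction with
  | _ S ih =>
    rcases S.eq_empty_or_nonempty with rfl | hS
    · simp
    · set M := S.max' hS with hM
      have hMS : M ∈ S := S.max'_mem hS
      have hsub : S ⊆ Finset.Icc 1 M := by
        intro s hs
        exact Finset.mem_Icc.2 ⟨h s hs, S.le_max' s hs⟩
      have hcard : (S.card : ℤ) ≤ M := by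
        have := Finset.card_le_card hsub
        rw [Int.card_Icc] at this
        have h1M : (1:ℤ) ≤ M := h M hMS
        omega
      have her : S.erase M ⊂ S := Finset.erase_ssubset hMS
      have hih := ih (S.erase M) her (fun s hs => h s (Finset.mem_of_mem_erase hs))
      have hsum : ∑ s ∈ S, s = M + ∑ s ∈ S.erase M, s :=
        (Finset.add_sum_erase S id hMS).symm
      have hc : S.card = (S.erase M).card + 1 := by
        rw [Finset.card_erase_of_mem hMS]
        have := Finset.card_pos.2 hS
        omega
      rw [hsum]
      have : (S.card : ℤ) = ((S.erase M).card : ℤ) + 1 := by exact_mod_cast congrArg Nat.cast hc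
      rw [this] at hcard ⊢
      nlinarith [hih, hcard]

lemma gauss (K : ℕ) : 2 * ∑ k ∈ Finset.Icc 1 K, (k:ℤ) = K * (K + 1) := by
  induction K with
  | zero => simp
  | succ K ih =>
    rw [Finset.sum_Icc_succ_top (by omega)]
    push_cast
    push_cast at ih
    ring_nf
    ring_nf at ih
    linarith


lemma telescope (a : ℕ → ℤ) (n : ℤ) (m k : ℕ) (hk1 : 1 ≤ k) (hkm : k ≤ m)
    (hb : ∀ i, i < m → 1 ≤ a i ∧ a i ≤ n) :
    ∑ i ∈ Finset.range (m - k), (a (i + k) - a i) ≤ (k : ℤ) * (n - 1) := by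
  have hn1 : (1:ℤ) ≤ n := by
    have := hb 0 (by omega)
    omega
  rw [Finset.sum_sub_distrib]
  have h1 : ∑ i ∈ Finset.range (m - k), a (i + k) = ∑ j ∈ Finset.Ico k m, a j := by
    rw [Finset.sum_Ico_eq_sum_range]
    exact Finset.sum_congr rfl fun i _ => by rw [Nat.add_comm]
  have h2 : ∑ i ∈ Finset.range (m - k), a i = ∑ j ∈ Finset.Ico 0 (m - k), a j := by
    rw [Finset.range_eq_Ico]
  rw [h1, h2]
  by_cases hc : k ≤ m - k
  · have e1 : ∑ j ∈ Finset.Ico k (m-k), a j + ∑ j ∈ Finset.Ico (m-k) m, a j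
        = ∑ j ∈ Finset.Ico k m, a j :=
      Finset.sum_Ico_consecutive a hc (Nat.sub_le m k)
    have e2 : ∑ j ∈ Finset.Ico 0 k, a j + ∑ j ∈ Finset.Ico k (m-k), a j
        = ∑ j ∈ Finset.Ico 0 (m-k), a j :=
      Finset.sum_Ico_consecutive a (Nat.zero_le k) hc
    have u : ∑ j ∈ Finset.Ico (m-k) m, a j ≤ (k:ℤ) * n := by
      have := Finset.sum_le_card_nsmul (Finset.Ico (m-k) m) a n
        (fun j hj => (hb j (Finset.mem_Ico.1 hj).2).2)
      rw [Nat.card_Ico] at this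
      have hmk : m - (m - k) = k := by omega
      rw [hmk] at this
      simpa [nsmul_eq_mul] using this
    have l : (k:ℤ) * 1 ≤ ∑ j ∈ Finset.Ico 0 k, a j := by
      have := Finset.card_nsmul_le_sum (Finset.Ico 0 k) a 1
        (fun j hj => (hb j (by have := (Finset.mem_Ico.1 hj).2; omega)).1)
      rw [Nat.card_Ico] at this
      simpa [nsmul_eq_mul] using this
    linarith
  · have u : ∑ j ∈ Finset.Ico k m, a j ≤ ((m-k : ℕ):ℤ) * n := by
      have := Finset.sum_le_card_nsmul (Finset.Ico k m) a n
        (fun j hj => (hb j (Finset.mem_Ico.1 hj).2).2)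
      rw [Nat.card_Ico] at this
      simpa [nsmul_eq_mul] using this
    have l : ((m-k : ℕ):ℤ) * 1 ≤ ∑ j ∈ Finset.Ico 0 (m-k), a j := by
      have := Finset.card_nsmul_le_sum (Finset.Ico 0 (m-k)) a 1
        (fun j hj => (hb j (by have := (Finset.mem_Ico.1 hj).2; omega)).1)
      rw [Nat.card_Ico] at this
      simpa [nsmul_eq_mul] using this
    have hle : ((m-k : ℕ):ℤ) ≤ (k:ℤ) := by
      have : m - k ≤ k := by omega
      exact_mod_cast this
    nlinarith


lemma finalarith (x K N n m : ℝ) (hx : 1 ≤ x) (hx4 : x^4 = n)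
    (hK1 : K ≤ x + 1/2) (hK2 : x - 1/2 < K)
    (hN : 2*N = 2*K*m - K*(K+1))
    (hineq : N*(N+1) ≤ K*(K+1)*(n-1))
    (hm : x^2 + x + 1/2 ≤ m) : False := by
  have hKpos : 0 < K := by nlinarith
  obtain ⟨S, hS⟩ : ∃ S : ℝ, S = K*(x^2+x) - K*K/2 := ⟨_, rfl⟩
  have hNS : S ≤ N := by rw [hS]; nlinarith [mul_nonneg hKpos.le (sub_nonneg.2 hm)]
  have hS0 : 0 ≤ S := by
    rw [hS]
    nlinarith [mul_nonneg hKpos.le (sq_nonneg x), mul_pos hKpos hKpos]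
  have key : S*(S+1) ≤ K*(K+1)*(x^4-1) := by
    nlinarith [mul_nonneg (sub_nonneg.2 hNS) (by linarith : (0:ℝ) ≤ N + S + 1)]
  rw [hS] at key
  nlinarith [sq_nonneg (K - x), sq_nonneg (x-1), mul_pos hKpos hKpos,
    sq_nonneg (x*(K-x)), sq_nonneg ((K-x)*(K-x)), sq_nonneg x,
    mul_nonneg (sub_nonneg.2 hx) (sq_nonneg (K-x)),
    mul_nonneg (mul_nonneg (sub_nonneg.2 hx) (sub_nonneg.2 hx)) (sq_nonneg (K-x)),
    mul_nonneg (sub_nonneg.2 hK2.le) (sub_nonneg.2 hK1),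
    mul_nonneg (mul_nonneg (sub_nonneg.2 hK2.le) (sub_nonneg.2 hK1)) (sub_nonneg.2 hx),
    mul_nonneg (mul_nonneg (mul_nonneg (sub_nonneg.2 hK2.le) (sub_nonneg.2 hK1)) (sub_nonneg.2 hx)) (sub_nonneg.2 hx)]

theorem stmt_9 (n : ℕ) (hn : 0 < n) (A : Finset ℤ)
    (hAsub : A ⊆ Finset.Icc 1 (n : ℤ)) (hA : IsSidon A) :
    (A.card : ℝ) < (n : ℝ) ^ ((1 : ℝ) / 2) + (n : ℝ) ^ ((1 : ℝ) / 4) + 1 / 2 := by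
  set m := A.card with hm
  set x : ℝ := (n:ℝ) ^ ((1:ℝ)/4) with hxdef
  have hn1 : (1:ℝ) ≤ (n:ℝ) := by exact_mod_cast hn
  have hx1 : 1 ≤ x := Real.one_le_rpow hn1 (by norm_num)
  have hx4 : x^4 = (n:ℝ) := by
    rw [hxdef, ← Real.rpow_natCast (((n:ℝ)) ^ ((1:ℝ)/4)) 4, ← Real.rpow_mul (by positivity)]
    norm_num
  have hx2 : (n:ℝ) ^ ((1:ℝ)/2) = x^2 := by
    rw [hxdef, ← Real.rpow_natCast (((n:ℝ)) ^ ((1:ℝ)/4)) 2, ← Real.rpow_mul (by positivity)]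
    norm_num
  rw [hx2]
  by_contra hcon
  push_neg at hcon
  -- K = round(x)
  have hKz1 : 1 ≤ ⌊x + 1/2⌋ := by
    rw [Int.le_floor]; push_cast; linarith
  set K : ℕ := (⌊x + 1/2⌋).toNat with hKdef
  have hKcast : (K:ℝ) = (⌊x + 1/2⌋ : ℤ) := by
    rw [hKdef]; exact_mod_cast Int.toNat_of_nonneg (by omega)
  have hK1 : (K:ℝ) ≤ x + 1/2 := by rw [hKcast]; exact Int.floor_le _
  have hK2 : x - 1/2 < (K:ℝ) := by
    rw [hKcast]; have := Int.lt_floor_add_one (x + 1/2); linarith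
  by_cases hmK : m ≤ K
  · have hmr : (m:ℝ) ≤ (K:ℝ) := by exact_mod_cast hmK
    nlinarith
  push_neg at hmK   -- K < m
  -- enumerate A
  have hAc : A.card = m := hm.symm
  set a : ℕ → ℤ := fun i => if h : i < m then A.orderEmbOfFin hAc ⟨i, h⟩ else 0 with ha
  have hmem : ∀ i, i < m → a i ∈ A := by
    intro i hi
    simp only [ha, dif_pos hi]
    exact Finset.orderEmbOfFin_mem A hAc ⟨i, hi⟩
  have hmono : ∀ i j, i < j → j < m → a i < a j := by
    intro i j hij hj
    have hi : i < m := lt_trans hij hj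
    simp only [ha, dif_pos hi, dif_pos hj]
    exact (A.orderEmbOfFin hAc).strictMono (Fin.mk_lt_mk.mpr hij)
  have hinj : ∀ i j, i < m → j < m → a i = a j → i = j := by
    intro i j hi hj he
    rcases lt_trichotomy i j with h|h|h
    · exact absurd he (ne_of_lt (hmono i j h hj))
    · exact h
    · exact absurd he.symm (ne_of_lt (hmono j i h hi))
  have hb : ∀ i, i < m → 1 ≤ a i ∧ a i ≤ (n:ℤ) := by
    intro i hi
    have := hAsub (hmem i hi)
    exact Finset.mem_Icc.1 this
  -- the sigma set of index pairs
  set Q : Finset ((_ : ℕ) × ℕ) :=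
    (Finset.Icc 1 K).sigma (fun k => Finset.range (m - k)) with hQ
  set f : (Σ _ : ℕ, ℕ) → ℤ := fun q => a (q.2 + q.1) - a q.2 with hf
  have hqprop : ∀ q ∈ Q, 1 ≤ q.1 ∧ q.1 ≤ K ∧ q.2 + q.1 < m := by
    intro q hq
    rw [hQ, Finset.mem_sigma] at hq
    obtain ⟨h1, h2⟩ := hq
    rw [Finset.mem_Icc] at h1
    rw [Finset.mem_range] at h2
    exact ⟨h1.1, h1.2, by omega⟩
  have hfpos : ∀ q ∈ Q, 1 ≤ f q := by
    intro q hq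
    obtain ⟨h1, h2, h3⟩ := hqprop q hq
    have hlt := hmono q.2 (q.2 + q.1) (by omega) h3
    show (1:ℤ) ≤ a (q.2 + q.1) - a q.2
    omega
  have hfinj : ∀ q ∈ Q, ∀ q' ∈ Q, f q = f q' → q = q' := by
    rintro ⟨k, i⟩ hq ⟨k', i'⟩ hq' he
    obtain ⟨h1, h2, h3⟩ := hqprop _ hq
    obtain ⟨h1', h2', h3'⟩ := hqprop _ hq'
    dsimp only at h1 h2 h3 h1' h2' h3'
    have he' : a (i + k) - a i = a (i' + k') - a i' := he
    have hsum : a (i + k) + a i' = a (i' + k') + a i := by omega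
    have hi'm : i' < m := by omega
    have him : i < m := by omega
    rcases hA _ (hmem _ h3) _ (hmem _ hi'm) _ (hmem _ h3')
        _ (hmem _ him) hsum with ⟨e1, e2⟩ | ⟨e1, e2⟩
    · have hik : i + k = i' + k' := hinj _ _ h3 h3' e1
      have hii : i' = i := hinj _ _ hi'm him e2
      have hkk : k = k' := by omega
      subst hkk; subst hii; rfl
    · have h0 : i + k = i := hinj _ _ h3 him e1
      omega
  -- total sum T
  have hTQ : ∑ k ∈ Finset.Icc 1 K, ∑ i ∈ Finset.range (m - k), (a (i + k) - a i)
      = ∑ q ∈ Q, f q := by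
    rw [hQ, Finset.sum_sigma]
  have hTupper : 2 * ∑ q ∈ Q, f q ≤ (K:ℤ) * (K + 1) * ((n:ℤ) - 1) := by
    rw [← hTQ]
    have h1 : ∑ k ∈ Finset.Icc 1 K, ∑ i ∈ Finset.range (m - k), (a (i + k) - a i)
        ≤ ∑ k ∈ Finset.Icc 1 K, (k:ℤ) * ((n:ℤ) - 1) := by
      refine Finset.sum_le_sum fun k hk => ?_
      rw [Finset.mem_Icc] at hk
      exact telescope a n m k hk.1 (by omega) hb
    have h2 : ∑ k ∈ Finset.Icc 1 K, (k:ℤ) * ((n:ℤ) - 1)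
        = (∑ k ∈ Finset.Icc 1 K, (k:ℤ)) * ((n:ℤ) - 1) := by
      rw [Finset.sum_mul]
    have h3 := gauss K
    have hnn : (1:ℤ) ≤ (n:ℤ) := by exact_mod_cast hn
    nlinarith [h1, h2, h3]
  -- lower bound via distinct positive differences
  have hcardim : (Q.image f).card = Q.card := Finset.card_image_of_injOn hfinj
  have hsumim : ∑ y ∈ Q.image f, y = ∑ q ∈ Q, f q := Finset.sum_image hfinj
  have hlow := sum_distinct_pos (Q.image f) (by
    intro s hs
    obtain ⟨q, hq, rfl⟩ := Finset.mem_image.1 hs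
    exact hfpos q hq)
  rw [hcardim, hsumim] at hlow
  -- compute Q.card
  have hQcard : Q.card = ∑ k ∈ Finset.Icc 1 K, (m - k) := by
    rw [hQ, Finset.card_sigma]
    exact Finset.sum_congr rfl fun k _ => Finset.card_range _
  have hNcast : (Q.card : ℤ) = ∑ k ∈ Finset.Icc 1 K, ((m:ℤ) - (k:ℤ)) := by
    rw [hQcard, Nat.cast_sum]
    refine Finset.sum_congr rfl fun k hk => ?_
    have hk2 := (Finset.mem_Icc.1 hk).2
    have hkm : k ≤ m := by omega
    exact Nat.cast_sub hkm
  have hNval : 2 * (Q.card : ℤ) = 2 * K * m - K * (K + 1) := by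
    rw [hNcast, Finset.sum_sub_distrib, Finset.sum_const, Nat.card_Icc]
    have h3 := gauss K
    have : (K + 1 - 1 : ℕ) = K := by omega
    rw [this]
    simp only [nsmul_eq_mul]
    linarith
  -- combined integer inequality
  have hZ : (Q.card : ℤ) * ((Q.card : ℤ) + 1) ≤ (K:ℤ) * (K + 1) * ((n:ℤ) - 1) := by
    calc (Q.card : ℤ) * ((Q.card : ℤ) + 1) ≤ 2 * ∑ q ∈ Q, f q := hlow
    _ ≤ (K:ℤ) * (K + 1) * ((n:ℤ) - 1) := hTupper
  -- finish in ℝ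
  refine finalarith x (K:ℝ) (Q.card : ℝ) (n:ℝ) (m:ℝ) hx1 hx4 hK1 hK2 ?_ ?_ hcon
  · exact_mod_cast hNval
  · exact_mod_cast hZ
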